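/- arXiv:2410.03846 — 3 statements merged into one kernel-verified Lean document; each statement's English description precedes it below -/
import Mathlib

section
/- Let Ā ∈ ℝ^{5×5} be the block matrix with Ā₁₂ = 1, second row Ā₂,₃:₅ = gᵀ, all other entries zero, and let A(t) = Ā ⊗ I₃ − I₅ ⊗ [ω(t)]_× for a continuous ω : ℝ → ℝ³. Let R : ℝ → SO(3) satisfy Ṙ = R[ω]_×, and T(t) = I₅ ⊗ R(t). Then φ(t,s) := T(t)ᵀ (exp(Ā(t−s)) ⊗ I₃) T(s) is the state transition matrix of ẋ = A(t)x, i.e., ∂φ(t,s)/∂t = A(t)φ(t,s) and φ(t,t) = I₁₅. -/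
/-!
From `Ṙ = R [ω]_×` and `[ω]_×ᵀ = -[ω]_×` we get `d/dt T(t)ᵀ = -(I₅ ⊗ [ω]_×) T(t)ᵀ`, while
`d/dt (exp(Ā(t−s)) ⊗ I₃) = (Ā ⊗ I₃)(exp(Ā(t−s)) ⊗ I₃)`. By the mixed-product rule `Ā ⊗ I₃`
commutes with `T(t)ᵀ = I₅ ⊗ R(t)ᵀ`, so the product rule gives
`∂φ/∂t = (Ā ⊗ I₃ − I₅ ⊗ [ω]_×) φ = A(t) φ`. At `t = s` the exponential is the identity and
`φ(t,t) = I₅ ⊗ R(t)ᵀR(t) = I`.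
-/

open Matrix
open scoped Kronecker

/-- The skew-symmetric (cross-product) matrix of `x ∈ ℝ³`. -/
def skew (x : Fin 3 → ℝ) : Matrix (Fin 3) (Fin 3) ℝ :=
  !![0, -x 2, x 1; x 2, 0, -x 0; -x 1, x 0, 0]

/-- The matrix `Ā = [[0, 1, 0₁ₓ₃], [0, 0, gᵀ], [0₃ₓ₁, 0₃ₓ₁, 0₃ₓ₃]]`. -/
def Abar (g : Fin 3 → ℝ) : Matrix (Fin 5) (Fin 5) ℝ :=
  Matrix.of fun i j =>
    if i.val = 0 ∧ j.val = 1 then 1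
    else if h : i.val = 1 ∧ 2 ≤ j.val then g ⟨j.val - 2, by omega⟩
    else 0

section MatrixCalculus

variable {𝕜 : Type*} [NontriviallyNormedField 𝕜] {l m n p : Type*} {t : 𝕜}

theorem hasDerivAt_matrix [Fintype n] {f : 𝕜 → Matrix m n 𝕜} {f' : Matrix m n 𝕜} :
    HasDerivAt f f' t ↔ ∀ i j, HasDerivAt (fun τ => f τ i j) (f' i j) t :=
  hasDerivAt_pi.trans (forall_congr' fun _ => hasDerivAt_pi)

theorem HasDerivAt.matrix_mul [Fintype m] [Fintype n] {f : 𝕜 → Matrix l m 𝕜}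
    {g : 𝕜 → Matrix m n 𝕜} {f' : Matrix l m 𝕜} {g' : Matrix m n 𝕜} (hf : HasDerivAt f f' t)
    (hg : HasDerivAt g g' t) :
    HasDerivAt (fun τ => f τ * g τ) (f' * g t + f t * g') t := by
  rw [hasDerivAt_matrix] at hf hg ⊢
  intro i k
  simp only [Matrix.add_apply, Matrix.mul_apply, ← Finset.sum_add_distrib]
  exact HasDerivAt.fun_sum fun j _ => (hf i j).mul (hg j k)

theorem HasDerivAt.matrix_mul_const [Fintype m] [Fintype n] {f : 𝕜 → Matrix l m 𝕜}
    {f' : Matrix l m 𝕜} (hf : HasDerivAt f f' t) (B : Matrix m n 𝕜) :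
    HasDerivAt (fun τ => f τ * B) (f' * B) t := by
  refine hasDerivAt_matrix.2 fun i k => ?_
  simp only [Matrix.mul_apply]
  exact HasDerivAt.fun_sum fun j _ => (hasDerivAt_matrix.1 hf i j).mul_const (B j k)

theorem HasDerivAt.matrix_transpose [Fintype m] [Fintype n] {f : 𝕜 → Matrix m n 𝕜}
    {f' : Matrix m n 𝕜} (hf : HasDerivAt f f' t) : HasDerivAt (fun τ => (f τ)ᵀ) f'ᵀ t :=
  hasDerivAt_matrix.2 fun i j => hasDerivAt_matrix.1 hf j i

theorem HasDerivAt.matrix_kronecker_const [Fintype m] [Fintype p] {f : 𝕜 → Matrix l m 𝕜}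
    {f' : Matrix l m 𝕜} (hf : HasDerivAt f f' t) (B : Matrix n p 𝕜) :
    HasDerivAt (fun τ => f τ ⊗ₖ B) (f' ⊗ₖ B) t :=
  hasDerivAt_matrix.2 fun i j => (hasDerivAt_matrix.1 hf i.1 j.1).mul_const (B i.2 j.2)

theorem HasDerivAt.const_matrix_kronecker [Fintype m] [Fintype p] {f : 𝕜 → Matrix n p 𝕜}
    {f' : Matrix n p 𝕜} (A : Matrix l m 𝕜) (hf : HasDerivAt f f' t) :
    HasDerivAt (fun τ => A ⊗ₖ f τ) (A ⊗ₖ f') t :=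
  hasDerivAt_matrix.2 fun i j => (hasDerivAt_matrix.1 hf i.2 j.2).const_mul (A i.1 j.1)

end MatrixCalculus

theorem Matrix.hasDerivAt_exp_sub_smul {𝕂 m : Type*} [RCLike 𝕂] [Fintype m] [DecidableEq m]
    (A : Matrix m m 𝕂) (s t : 𝕂) :
    HasDerivAt (fun τ => NormedSpace.exp ((τ - s) • A)) (A * NormedSpace.exp ((t - s) • A)) t := by
  rw [hasDerivAt_matrix]
  intro i j
  -- `Matrix` carries no global normed-ring instance; the ℓ∞ operator norm supplies one
  let _ : NormedRing (Matrix m m 𝕂) := Matrix.linftyOpNormedRing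
  let _ : NormedAlgebra 𝕂 (Matrix m m 𝕂) := Matrix.linftyOpNormedAlgebra
  have := FiniteDimensional.proper_rclike 𝕂 (Matrix m m 𝕂)
  have hexp := (hasDerivAt_exp_smul_const' (𝕂 := 𝕂) A (t - s)).scomp t
    ((hasDerivAt_id t).sub_const s)
  rw [one_smul] at hexp
  exact (LinearMap.toContinuousLinearMap (entryLinearMap 𝕂 𝕂 i j)).hasFDerivAt.comp_hasDerivAt t
    hexp

theorem skew_transpose (x : Fin 3 → ℝ) : (skew x)ᵀ = -skew x := by
  ext i j
  fin_cases i <;> fin_cases j <;> simp [skew]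

theorem Matrix.kronecker_neg {α l m n p : Type*} [Ring α] (A : Matrix l m α) (B : Matrix n p α) :
    A ⊗ₖ (-B) = -(A ⊗ₖ B) := by
  ext i j
  simp [kroneckerMap_apply]

theorem Matrix.commute_kronecker_one_one_kronecker {α m n : Type*} [CommSemiring α]
    [Fintype m] [Fintype n] [DecidableEq m] [DecidableEq n] (A : Matrix m m α) (B : Matrix n n α) :
    Commute (A ⊗ₖ (1 : Matrix n n α)) ((1 : Matrix m m α) ⊗ₖ B) := by
  rw [Commute, SemiconjBy, ← mul_kronecker_mul, ← mul_kronecker_mul]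
  simp only [Matrix.one_mul, Matrix.mul_one]

theorem hasDerivAt_one_kronecker_transpose {𝕜 m n : Type*} [NontriviallyNormedField 𝕜]
    [Fintype m] [Fintype n] [DecidableEq m] {R : 𝕜 → Matrix n n 𝕜} {S : Matrix n n 𝕜} {t : 𝕜}
    (hR : HasDerivAt R (R t * S) t) (hS : Sᵀ = -S) :
    HasDerivAt (fun τ => ((1 : Matrix m m 𝕜) ⊗ₖ R τ)ᵀ)
      (-((1 : Matrix m m 𝕜) ⊗ₖ S) * ((1 : Matrix m m 𝕜) ⊗ₖ R t)ᵀ) t := by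
  simp only [← kroneckerMap_transpose, transpose_one]
  convert (hR.matrix_transpose).const_matrix_kronecker (1 : Matrix m m 𝕜) using 1
  rw [transpose_mul, hS, ← kronecker_neg, ← mul_kronecker_mul, Matrix.one_mul, Matrix.neg_mul]

theorem transition_matrix_INS_general (g : Fin 3 → ℝ) (ω : ℝ → Fin 3 → ℝ)
    (R : ℝ → Matrix (Fin 3) (Fin 3) ℝ)
    (hSO : ∀ t, R t * (R t)ᵀ = 1 ∧ (R t)ᵀ * R t = 1 ∧ (R t).det = 1)
    (hR : ∀ t i j, HasDerivAt (fun s => R s i j) ((R t * skew (ω t)) i j) t)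
    (A : ℝ → Matrix (Fin 5 × Fin 3) (Fin 5 × Fin 3) ℝ)
    (hA : ∀ t, A t = Abar g ⊗ₖ (1 : Matrix (Fin 3) (Fin 3) ℝ)
        - (1 : Matrix (Fin 5) (Fin 5) ℝ) ⊗ₖ skew (ω t))
    (T : ℝ → Matrix (Fin 5 × Fin 3) (Fin 5 × Fin 3) ℝ)
    (hT : ∀ t, T t = (1 : Matrix (Fin 5) (Fin 5) ℝ) ⊗ₖ R t)
    (φ : ℝ → ℝ → Matrix (Fin 5 × Fin 3) (Fin 5 × Fin 3) ℝ)
    (hφ : ∀ t s, φ t s =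
      (T t)ᵀ * ((NormedSpace.exp ((t - s) • Abar g)) ⊗ₖ (1 : Matrix (Fin 3) (Fin 3) ℝ)) * T s) :
    (∀ s t i j, HasDerivAt (fun τ => φ τ s i j) ((A t * φ t s) i j) t) ∧
      (∀ t, φ t t = 1) := by
  refine ⟨fun s t => hasDerivAt_matrix.1 ?_, fun t => ?_⟩
  · have hTt := hasDerivAt_one_kronecker_transpose (m := Fin 5)
      (hasDerivAt_matrix.2 (hR t)) (skew_transpose (ω t))
    have hΨ := (hasDerivAt_exp_sub_smul (Abar g) s t).matrix_kronecker_const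
      (1 : Matrix (Fin 3) (Fin 3) ℝ)
    have hφs : (fun τ => φ τ s) = fun τ => ((1 : Matrix (Fin 5) (Fin 5) ℝ) ⊗ₖ R τ)ᵀ *
        (NormedSpace.exp ((τ - s) • Abar g) ⊗ₖ (1 : Matrix (Fin 3) (Fin 3) ℝ)) * T s :=
      funext fun τ => by rw [hφ, hT]
    rw [hφs]
    convert (hTt.matrix_mul hΨ).matrix_mul_const (T s) using 1
    have hKΨ : (Abar g * NormedSpace.exp ((t - s) • Abar g)) ⊗ₖ (1 : Matrix (Fin 3) (Fin 3) ℝ)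
        = (Abar g ⊗ₖ 1) * (NormedSpace.exp ((t - s) • Abar g) ⊗ₖ 1) := by
      rw [← mul_kronecker_mul, Matrix.mul_one]
    rw [hA, hφ, hT t, ← kroneckerMap_transpose, transpose_one, hKΨ,
      (commute_kronecker_one_one_kronecker (Abar g) (R t)ᵀ).symm.left_comm]
    noncomm_ring
  · rw [hφ, hT, sub_self, zero_smul, NormedSpace.exp_zero, ← kroneckerMap_transpose,
      transpose_one, ← mul_kronecker_mul, ← mul_kronecker_mul]
    simp only [Matrix.mul_one, (hSO t).2.1, one_kronecker_one]

/-- `φ(t,s) = T(t)ᵀ (exp(Ā(t−s)) ⊗ I₃) T(s)` is the state transition matrix of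
`ẋ = A(t)x` with `A(t) = Ā ⊗ I₃ − I₅ ⊗ [ω(t)]_×`. -/
theorem transition_matrix_INS (g : Fin 3 → ℝ) (ω : ℝ → Fin 3 → ℝ) (hω : Continuous ω)
    (R : ℝ → Matrix (Fin 3) (Fin 3) ℝ)
    (hSO : ∀ t, R t * (R t)ᵀ = 1 ∧ (R t)ᵀ * R t = 1 ∧ (R t).det = 1)
    (hR : ∀ t i j, HasDerivAt (fun s => R s i j) ((R t * skew (ω t)) i j) t)
    (A : ℝ → Matrix (Fin 5 × Fin 3) (Fin 5 × Fin 3) ℝ)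
    (hA : ∀ t, A t = Abar g ⊗ₖ (1 : Matrix (Fin 3) (Fin 3) ℝ)
        - (1 : Matrix (Fin 5) (Fin 5) ℝ) ⊗ₖ skew (ω t))
    (T : ℝ → Matrix (Fin 5 × Fin 3) (Fin 5 × Fin 3) ℝ)
    (hT : ∀ t, T t = (1 : Matrix (Fin 5) (Fin 5) ℝ) ⊗ₖ R t)
    (φ : ℝ → ℝ → Matrix (Fin 5 × Fin 3) (Fin 5 × Fin 3) ℝ)
    (hφ : ∀ t s, φ t s =
      (T t)ᵀ * ((NormedSpace.exp ((t - s) • Abar g)) ⊗ₖ (1 : Matrix (Fin 3) (Fin 3) ℝ)) * T s) :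
    (∀ s t i j, HasDerivAt (fun τ => φ τ s i j) ((A t * φ t s) i j) t) ∧
      (∀ t, φ t t = 1) :=
  transition_matrix_INS_general g ω R hSO hR A hA T hT φ hφ
end

section
/- Let Ā ∈ ℝ^{5×5} be the matrix with Ā₁₂ = 1, Ā₂,₃:₅ = gᵀ for some fixed g ∈ ℝ³ and zeros elsewhere, and let C̄ = [[−𝟙_p, 0_p, rᵀ], [0, 0, ξᵀ]] ∈ ℝ^{(p+1)×5} where r ∈ ℝ^{p×3} has rows r₁ᵀ,…,r_pᵀ and ξ = (r₁−r₂)×(r₁−r₃). If r₁, r₂, r₃ are not collinear (i.e., r₁−r₂ and r₁−r₃ are linearly independent), then the observability matrix [C̄; C̄Ā; C̄Ā²] has rank 5, i.e., the pair (Ā, C̄) is Kalman observable. -/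
/-!
Let `y = (x₂, x₃, x₄)`. If `C̄ x = 0`, the first `p` rows say `rᵢ ⬝ y = x₀` for every `i`, so `y` is
orthogonal to `r₁ - r₂`, `r₁ - r₃` and, by the last row, to their cross product `ξ`; these three
vectors span `ℝ³`, so `y = 0` and then `x₀ = 0`. Since `Ā x = (x₁, g ⬝ y, 0, 0, 0)`, applying the
same to `C̄ Ā x = 0` gives `x₁ = 0`. Thus the observability matrix has trivial kernel.
-/

open Matrix
open scoped Matrix

/-- `C̄ = [[−𝟙_p, 0_p, rᵀ], [0, 0, ξᵀ]]`: rows `i < p` are `[−1, 0, rᵢᵀ]` and the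
last row is `[0, 0, ξᵀ]`. -/
def Cbar (p : ℕ) (r : Fin p → Fin 3 → ℝ) (ξ : Fin 3 → ℝ) :
    Matrix (Fin (p + 1)) (Fin 5) ℝ :=
  Matrix.of fun i j =>
    if hi : i.val < p then
      if j.val = 0 then -1
      else if hj : 2 ≤ j.val then r ⟨i.val, hi⟩ ⟨j.val - 2, by omega⟩
      else 0
    else
      if hj : 2 ≤ j.val then ξ ⟨j.val - 2, by omega⟩ else 0

theorem Matrix.rank_eq_card_of_mulVec_eq_zero {m n K : Type*} [Fintype n] [Field K]
    {A : Matrix m n K} (h : ∀ x, A *ᵥ x = 0 → x = 0) : A.rank = Fintype.card n := by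
  have hinj : Function.Injective A.mulVecLin :=
    LinearMap.ker_eq_bot.mp (LinearMap.ker_eq_bot'.mpr h)
  rw [Matrix.rank, LinearMap.finrank_range_of_inj hinj, Module.finrank_fintype_fun_eq_card]

theorem eq_zero_of_dotProduct_cross_eq_zero {R : Type*} [Field R] [LinearOrder R]
    [IsStrictOrderedRing R] {u v x : Fin 3 → R} (huv : LinearIndependent R ![u, v])
    (hu : u ⬝ᵥ x = 0) (hv : v ⬝ᵥ x = 0) (huvx : (u ⨯₃ v) ⬝ᵥ x = 0) : x = 0 := by
  set w := u ⨯₃ v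
  have hw : w ⬝ᵥ w ≠ 0 :=
    dotProduct_self_eq_zero.not.mpr (crossProduct_ne_zero_iff_linearIndependent.mpr huv)
  -- By the triple product expansion `w ⨯₃ x = 0`, and `w ⨯₃ (w ⨯₃ x) = (w ⬝ᵥ x) • w - (w ⬝ᵥ w) • x`.
  have hwx : w ⨯₃ x = 0 := by
    rw [cross_cross_eq_smul_sub_smul, hu, hv]; simp
  have : (w ⬝ᵥ w) • x = 0 := by
    have h := cross_cross_eq_smul_sub_smul' w w x
    rw [hwx, huvx] at h
    simpa using h.symm
  exact (smul_eq_zero.mp this).resolve_left hw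

def tailThree (x : Fin 5 → ℝ) : Fin 3 → ℝ := fun k => x ⟨k + 2, by omega⟩

theorem Abar_mulVec (g : Fin 3 → ℝ) (x : Fin 5 → ℝ) :
    Abar g *ᵥ x = ![x 1, g ⬝ᵥ tailThree x, 0, 0, 0] := by
  ext i
  fin_cases i <;> simp [Abar, mulVec, dotProduct, Fin.sum_univ_five, tailThree, Fin.sum_univ_three]

theorem Cbar_mulVec_of_lt {p : ℕ} (r : Fin p → Fin 3 → ℝ) (ξ : Fin 3 → ℝ) (x : Fin 5 → ℝ)
    (i : Fin p) : (Cbar p r ξ *ᵥ x) i.castSucc = -x 0 + r i ⬝ᵥ tailThree x := by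
  simp [Cbar, mulVec, dotProduct, Fin.sum_univ_five, tailThree, Fin.sum_univ_three, add_assoc]

theorem Cbar_mulVec_last {p : ℕ} (r : Fin p → Fin 3 → ℝ) (ξ : Fin 3 → ℝ) (x : Fin 5 → ℝ) :
    (Cbar p r ξ *ᵥ x) (Fin.last p) = ξ ⬝ᵥ tailThree x := by
  simp [Cbar, mulVec, dotProduct, Fin.sum_univ_five, tailThree, Fin.sum_univ_three]

theorem Cbar_mulVec_eq_zero {p : ℕ} {r : Fin p → Fin 3 → ℝ} {ξ : Fin 3 → ℝ} {i j k : Fin p}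
    (hξ : ξ = (r i - r j) ⨯₃ (r i - r k)) (hind : LinearIndependent ℝ ![r i - r j, r i - r k])
    {x : Fin 5 → ℝ} (hx : Cbar p r ξ *ᵥ x = 0) : x 0 = 0 ∧ tailThree x = 0 := by
  have row (l : Fin p) : -x 0 + r l ⬝ᵥ tailThree x = 0 := by
    rw [← Cbar_mulVec_of_lt, hx, Pi.zero_apply]
  have htail : tailThree x = 0 := by
    refine eq_zero_of_dotProduct_cross_eq_zero hind ?_ ?_ ?_
    · linarith [sub_dotProduct (r i) (r j) (tailThree x), row i, row j]
    · linarith [sub_dotProduct (r i) (r k) (tailThree x), row i, row k]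
    · rw [← hξ, ← Cbar_mulVec_last r, hx, Pi.zero_apply]
  refine ⟨?_, htail⟩
  simpa [htail] using row i

/-- If `r₁, r₂, r₃` are not collinear, then the observability matrix
`[C̄; C̄Ā; C̄Ā²]` has rank 5, i.e., `(Ā, C̄)` is Kalman observable. -/
theorem stereo_INS_Kalman_observable (p : ℕ) (hp : 3 ≤ p)
    (g : Fin 3 → ℝ) (r : Fin p → Fin 3 → ℝ) (ξ : Fin 3 → ℝ)
    (hξ : ξ = (r ⟨0, by omega⟩ - r ⟨1, by omega⟩) ⨯₃ (r ⟨0, by omega⟩ - r ⟨2, by omega⟩))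
    (hind : LinearIndependent ℝ
      ![r ⟨0, by omega⟩ - r ⟨1, by omega⟩, r ⟨0, by omega⟩ - r ⟨2, by omega⟩])
    (O : Matrix (Fin 3 × Fin (p + 1)) (Fin 5) ℝ)
    (hO : O = Matrix.of fun q j => (Cbar p r ξ * Abar g ^ (q.1 : ℕ)) q.2 j) :
    O.rank = 5 := by
  subst hO
  refine (rank_eq_card_of_mulVec_eq_zero fun x hx => ?_).trans (Fintype.card_fin 5)
  have hblock (q : Fin 3) : Cbar p r ξ *ᵥ (Abar g ^ (q : ℕ) *ᵥ x) = 0 := by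
    ext i
    rw [mulVec_mulVec]
    exact congrFun hx (q, i)
  obtain ⟨hx0, htail⟩ := Cbar_mulVec_eq_zero hξ hind
    (by simpa only [Fin.val_zero, pow_zero, one_mulVec] using hblock 0)
  obtain ⟨hx1, -⟩ := Cbar_mulVec_eq_zero hξ hind
    (by simpa only [Fin.val_one, pow_one] using hblock 1)
  rw [Abar_mulVec] at hx1
  ext j
  fin_cases j
  exacts [hx0, hx1, congrFun htail 0, congrFun htail 1, congrFun htail 2]
end

section
/- Consider the error dynamics ė = (A(t) − KC(t)) e, where A(t) = Ā ⊗ I₃ + S(t), S(t) = −I₅ ⊗ [ω(t)]_×, C(t) = C̄ ⊗ I₃ (C̄ constant), K = K̄ ⊗ I₃, and R : ℝ → SO(3) satisfies Ṙ = R[ω]_× with T(t) = I₅ ⊗ R(t). Then η(t) := T(t) e(t) satisfies the linear time-invariant dynamics η̇ = ((Ā − K̄C̄) ⊗ I₃) η. In particular, if Ā − K̄C̄ is Hurwitz, then e(t) → 0 exponentially for any initial condition. -/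
/-!
Differentiating `η = T e` with `Ṫ = T (I₅ ⊗ [ω]_×)`, the rotational terms cancel, and since
`T = I₅ ⊗ R` commutes with `X ⊗ I₃` (where `X = Ā − K̄C̄`) one gets `η̇ = (X ⊗ I₃) η`, hence
`η(t) = exp (t (X ⊗ I₃)) η(0)`. The spectrum of `X ⊗ I₃` is contained in that of `X`, so it is
Hurwitz. For a Hurwitz matrix `M`, `exp (t M) v = e^{tμ} p(t)` with `p` a polynomial whenever `v`
is a generalized eigenvector for `μ`; choosing `r > 0` with `Re μ < -r` for every eigenvalue, all
these orbits are `O(e^{-rt})`, and generalized eigenvectors span `ℂⁿ`. Finally `T(t)` is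
orthogonal, so passing between `e` and `η` changes sup norms by at most the dimension `15`.
-/

open Matrix
open scoped Kronecker

/-- A real square matrix is Hurwitz if all its (complex) eigenvalues have
negative real part. -/
def Hurwitz {n : Type*} [Fintype n] [DecidableEq n] (M : Matrix n n ℝ) : Prop :=
  ∀ μ : ℂ, μ ∈ spectrum ℂ (M.map (algebraMap ℝ ℂ)) → μ.re < 0

open NormedSpace
open scoped Nat

theorem pow_mul_exp_neg_mul_le {a t : ℝ} (ha : 0 < a) (ht : 0 ≤ t) (j : ℕ) :
    t ^ j * Real.exp (-(a * t)) ≤ j ! / a ^ j := by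
  have h := Real.pow_div_factorial_le_exp (a * t) (by positivity) j
  rw [div_le_iff₀ (by positivity), mul_pow] at h
  rw [Real.exp_neg, le_div_iff₀ (by positivity), ← div_eq_mul_inv,
    div_mul_eq_mul_div, div_le_iff₀ (Real.exp_pos _)]
  linarith

theorem Matrix.hasDerivAt_mulVec {m n : Type*} [Fintype n] {B : ℝ → Matrix m n ℝ}
    {B' : Matrix m n ℝ} {x : ℝ → n → ℝ} {x' : n → ℝ} {t : ℝ}
    (hB : ∀ i j, HasDerivAt (fun s => B s i j) (B' i j) t) (hx : HasDerivAt x x' t) :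
    HasDerivAt (fun s => B s *ᵥ x s) (B' *ᵥ x t + B t *ᵥ x') t := by
  refine hasDerivAt_pi.2 fun i => ?_
  have hx := hasDerivAt_pi.1 hx
  simpa only [mulVec, dotProduct, Pi.add_apply, ← Finset.sum_add_distrib] using
    HasDerivAt.fun_sum fun j _ => (hB i j).fun_mul (hx j)

theorem Matrix.sub_kronecker {α l m n p : Type*} [Ring α] (A B : Matrix l m α)
    (C : Matrix n p α) : (A - B) ⊗ₖ C = A ⊗ₖ C - B ⊗ₖ C := by
  ext
  simp [sub_mul]

section Kronecker

variable {m n : Type*} [Fintype m] [DecidableEq m] [Fintype n] [DecidableEq n]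

theorem Matrix.spectrum_kronecker_one_subset {K : Type*} [Field K] (X : Matrix m m K) :
    spectrum K (X ⊗ₖ (1 : Matrix n n K)) ⊆ spectrum K X := by
  intro μ hμ
  rw [spectrum.mem_iff] at hμ ⊢
  refine fun hμX => hμ ?_
  have hsplit : algebraMap K _ μ - X ⊗ₖ (1 : Matrix n n K) = (algebraMap K _ μ - X) ⊗ₖ 1 := by
    rw [sub_kronecker, Algebra.algebraMap_eq_smul_one, Algebra.algebraMap_eq_smul_one,
      smul_kronecker, one_kronecker_one]
  rw [hsplit, isUnit_iff_isUnit_det, det_kronecker, det_one, one_pow, mul_one]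
  exact ((isUnit_iff_isUnit_det _).1 hμX).pow _

theorem Hurwitz.kronecker_one {X : Matrix m m ℝ} (hX : Hurwitz X) :
    Hurwitz (X ⊗ₖ (1 : Matrix n n ℝ)) := by
  intro μ hμ
  have hmap : (X ⊗ₖ (1 : Matrix n n ℝ)).map (algebraMap ℝ ℂ) = X.map (algebraMap ℝ ℂ) ⊗ₖ 1 := by
    ext ⟨i, i'⟩ ⟨j, j'⟩
    by_cases h : i' = j' <;> simp [one_apply, h]
  rw [hmap] at hμ
  exact hX μ (spectrum_kronecker_one_subset _ hμ)

theorem Matrix.one_kronecker_mul_kronecker_one {α : Type*} [CommSemiring α] (X : Matrix m m α)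
    (R : Matrix n n α) : (1 ⊗ₖ R) * (X ⊗ₖ 1) = (X ⊗ₖ 1) * (1 ⊗ₖ R) := by
  simp only [← mul_kronecker_mul, one_mul, mul_one]

end Kronecker

theorem Matrix.norm_mulVec_le_of_mem_unitaryGroup {𝕜 n : Type*} [RCLike 𝕜] [Fintype n]
    [DecidableEq n] {U : Matrix n n 𝕜} (hU : U ∈ unitaryGroup n 𝕜) (x : n → 𝕜) :
    ‖U *ᵥ x‖ ≤ Fintype.card n * ‖x‖ := by
  refine pi_norm_le_iff_of_nonneg (by positivity) |>.2 fun i => ?_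
  calc ‖(U *ᵥ x) i‖ ≤ ∑ j, ‖U i j * x j‖ := norm_sum_le _ _
    _ ≤ ∑ _j : n, 1 * ‖x‖ := by
        gcongr with j
        rw [norm_mul]
        exact mul_le_mul (entry_norm_bound_of_unitary hU i j) (norm_le_pi_norm x j)
          (norm_nonneg _) zero_le_one
    _ = Fintype.card n * ‖x‖ := by simp

namespace Matrix

variable {n : Type*} [Fintype n] [DecidableEq n]

section NormedRing

-- Mathlib has no global norm on matrices; any submultiplicative one serves for `exp`.
attribute [local instance] Matrix.linftyOpNormedRing Matrix.linftyOpNormedAlgebra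

theorem exp_smul_mulVec_of_pow_mulVec_eq_zero {M : Matrix n n ℂ} {μ : ℂ} {v : n → ℂ} {d : ℕ}
    (hv : (M - μ • 1) ^ d *ᵥ v = 0) (t : ℝ) :
    exp (t • M) *ᵥ v = Complex.exp (t * μ) •
      ∑ j ∈ Finset.range d, ((j ! : ℝ)⁻¹ * t ^ j) • ((M - μ • 1) ^ j *ᵥ v) := by
  set N := M - μ • (1 : Matrix n n ℂ)
  have hsplit : t • M = ((t : ℂ) * μ) • (1 : Matrix n n ℂ) + t • N := by
    rw [smul_sub, ← Complex.coe_smul t (μ • 1), smul_smul, add_sub_cancel]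
  have hscalar : exp (((t : ℂ) * μ) • (1 : Matrix n n ℂ)) = Complex.exp (t * μ) • 1 := by
    have := map_exp (algebraMap ℂ (Matrix n n ℂ)) (continuous_algebraMap ℂ _) (t * μ)
    rw [← Complex.exp_eq_exp_ℂ, Algebra.algebraMap_eq_smul_one,
      Algebra.algebraMap_eq_smul_one] at this
    exact this.symm
  have hterm (j : ℕ) :
      ((j ! : ℝ)⁻¹ • (t • N) ^ j) *ᵥ v = ((j ! : ℝ)⁻¹ * t ^ j) • (N ^ j *ᵥ v) := by
    rw [smul_pow, smul_smul, smul_mulVec]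
  have hvanish (j : ℕ) (hj : j ∉ Finset.range d) : ((j ! : ℝ)⁻¹ • (t • N) ^ j) *ᵥ v = 0 := by
    have hNj : N ^ j *ᵥ v = 0 := by
      rw [← Nat.sub_add_cancel (not_lt.1 (Finset.mem_range.not.1 hj)), pow_add, ← mulVec_mulVec,
        hv, mulVec_zero]
    rw [hterm, hNj, smul_zero]
  have hexpN : exp (t • N) *ᵥ v =
      ∑ j ∈ Finset.range d, ((j ! : ℝ)⁻¹ * t ^ j) • (N ^ j *ᵥ v) := by
    rw [congrFun (exp_eq_tsum ℝ) (t • N)]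
    refine ((expSeries_summable' (𝕂 := ℝ) (t • N)).map_tsum (mulVec.addMonoidHomLeft v)
      (continuous_id.matrix_mulVec continuous_const)).trans ?_
    change ∑' j, ((j ! : ℝ)⁻¹ • (t • N) ^ j) *ᵥ v = _
    rw [tsum_eq_sum hvanish]
    exact Finset.sum_congr rfl fun j _ => hterm j
  rw [hsplit, exp_add_of_commute _ _ (((Commute.one_left N).smul_left _).smul_right _), hscalar,
    smul_mul_assoc, one_mul, smul_mulVec, hexpN]

theorem norm_exp_smul_mulVec_eq_norm_map (M : Matrix n n ℝ) (t : ℝ) (v : n → ℝ) :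
    ‖exp (t • M) *ᵥ v‖ = ‖exp (t • M.map (algebraMap ℝ ℂ)) *ᵥ (algebraMap ℝ ℂ ∘ v)‖ := by
  have hexp : (exp (t • M)).map (algebraMap ℝ ℂ) = exp (t • M.map (algebraMap ℝ ℂ)) := by
    have := map_exp (algebraMap ℝ ℂ).mapMatrix
      (continuous_id.matrix_map Complex.continuous_ofReal) (t • M)
    refine this.trans ?_
    congr 1
    ext
    simp
  have hvec : exp (t • M.map (algebraMap ℝ ℂ)) *ᵥ (algebraMap ℝ ℂ ∘ v)
      = algebraMap ℝ ℂ ∘ (exp (t • M) *ᵥ v) := by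
    ext i
    rw [← hexp, Function.comp_apply, RingHom.map_mulVec]
  rw [hvec]
  simp [Pi.norm_def]

theorem hasDerivAt_exp_smul_mulVec (M : Matrix n n ℝ) (v : n → ℝ) (t : ℝ) :
    HasDerivAt (fun s : ℝ => exp (s • M) *ᵥ v) (M *ᵥ (exp (t • M) *ᵥ v)) t := by
  let applyAt : Matrix n n ℝ →L[ℝ] n → ℝ :=
    LinearMap.toContinuousLinearMap (LinearMap.applyₗ v ∘ₗ toLin'.toLinearMap)
  rw [mulVec_mulVec]
  exact applyAt.hasFDerivAt.comp_hasDerivAt t (hasDerivAt_exp_smul_const' M t)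

end NormedRing

theorem eq_exp_smul_mulVec_of_hasDerivAt (M : Matrix n n ℝ) {x : ℝ → n → ℝ}
    (hx : ∀ t, HasDerivAt x (M *ᵥ x t) t) (t : ℝ) : x t = exp (t • M) *ᵥ x 0 := by
  have hLip : LipschitzWith ‖M.mulVecLin.toContinuousLinearMap‖₊ (M *ᵥ ·) :=
    M.mulVecLin.toContinuousLinearMap.lipschitz
  have := ODE_solution_unique_univ (v := fun _ => (M *ᵥ ·)) (s := fun _ => Set.univ) (t₀ := 0)
    (fun _ => hLip.lipschitzOnWith) (fun t => ⟨hx t, trivial⟩)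
    (fun t => ⟨M.hasDerivAt_exp_smul_mulVec (x 0) t, trivial⟩) (by simp)
  exact congrFun this t

def expDecaySubmodule (M : Matrix n n ℂ) (r : ℝ) : Submodule ℂ (n → ℂ) where
  carrier := {w | ∃ c, ∀ t : ℝ, 0 ≤ t → ‖exp (t • M) *ᵥ w‖ ≤ c * Real.exp (-r * t)}
  zero_mem' := ⟨0, fun t _ => by simp⟩
  add_mem' := by
    rintro v w ⟨c, hc⟩ ⟨c', hc'⟩
    refine ⟨c + c', fun t ht => ?_⟩
    rw [mulVec_add, add_mul]
    exact (norm_add_le _ _).trans (add_le_add (hc t ht) (hc' t ht))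
  smul_mem' := by
    rintro a w ⟨c, hc⟩
    refine ⟨‖a‖ * c, fun t ht => ?_⟩
    rw [mulVec_smul, norm_smul, mul_assoc]
    exact mul_le_mul_of_nonneg_left (hc t ht) (norm_nonneg a)

theorem mem_expDecaySubmodule_of_pow_mulVec_eq_zero {M : Matrix n n ℂ} {μ : ℂ} {r : ℝ}
    (hμ : μ.re < -r) {v : n → ℂ} {d : ℕ} (hv : (M - μ • 1) ^ d *ᵥ v = 0) :
    v ∈ M.expDecaySubmodule r := by
  set N := M - μ • (1 : Matrix n n ℂ)
  set a := -μ.re - r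
  have ha : 0 < a := by linarith
  refine ⟨∑ j ∈ Finset.range d, ‖N ^ j *ᵥ v‖ / a ^ j, fun t ht => ?_⟩
  rw [exp_smul_mulVec_of_pow_mulVec_eq_zero hv, norm_smul, Complex.norm_exp,
    Complex.re_ofReal_mul, Finset.sum_mul]
  have hrate : Real.exp (t * μ.re) = Real.exp (-(a * t)) * Real.exp (-r * t) := by
    rw [← Real.exp_add]
    congr 1
    simp only [a]
    ring
  calc Real.exp (t * μ.re) * ‖∑ j ∈ Finset.range d, ((j ! : ℝ)⁻¹ * t ^ j) • (N ^ j *ᵥ v)‖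
      ≤ Real.exp (t * μ.re) * ∑ j ∈ Finset.range d, (j ! : ℝ)⁻¹ * t ^ j * ‖N ^ j *ᵥ v‖ := by
        gcongr
        refine (norm_sum_le _ _).trans (Finset.sum_le_sum fun j _ => ?_)
        rw [norm_smul, Real.norm_of_nonneg (by positivity)]
    _ = ∑ j ∈ Finset.range d,
          (j ! : ℝ)⁻¹ * ‖N ^ j *ᵥ v‖ * (t ^ j * Real.exp (-(a * t))) * Real.exp (-r * t) := by
        rw [hrate, Finset.mul_sum]
        exact Finset.sum_congr rfl fun j _ => by ring
    _ ≤ ∑ j ∈ Finset.range d,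
          (j ! : ℝ)⁻¹ * ‖N ^ j *ᵥ v‖ * (j ! / a ^ j) * Real.exp (-r * t) := by
        gcongr with j
        exact pow_mul_exp_neg_mul_le ha ht j
    _ = ∑ j ∈ Finset.range d, ‖N ^ j *ᵥ v‖ / a ^ j * Real.exp (-r * t) := by
        refine Finset.sum_congr rfl fun j _ => ?_
        field_simp

theorem expDecaySubmodule_eq_top {M : Matrix n n ℂ} {r : ℝ}
    (h : ∀ μ ∈ spectrum ℂ M, μ.re < -r) : M.expDecaySubmodule r = ⊤ := by
  rw [eq_top_iff, ← Module.End.iSup_maxGenEigenspace_eq_top (toLinAlgEquiv' M)]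
  refine iSup_le fun μ v hv => ?_
  obtain ⟨d, hd⟩ := (Module.End.mem_maxGenEigenspace _ _ _).1 hv
  rw [← map_one toLinAlgEquiv', ← map_smul, ← map_sub, ← map_pow, toLinAlgEquiv'_apply] at hd
  by_cases hv0 : v = 0
  · rw [hv0]
    exact zero_mem _
  refine mem_expDecaySubmodule_of_pow_mulVec_eq_zero (h μ ?_) hd
  rw [spectrum.mem_iff, Algebra.algebraMap_eq_smul_one]
  intro hunit
  have hpow := hunit.neg.pow d
  rw [neg_sub] at hpow
  exact hv0 (mulVec_injective_iff_isUnit.2 hpow (hd.trans (mulVec_zero _).symm))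

end Matrix

theorem Matrix.exists_norm_mulVec_le_of_forall_exists {ι 𝕜 m n : Type*} [NormedField 𝕜]
    [Fintype m] [Fintype n] [DecidableEq n] {B : ι → Matrix m n 𝕜} {f : ι → ℝ}
    (hf : ∀ i, 0 ≤ f i) (h : ∀ v, ∃ c, ∀ i, ‖B i *ᵥ v‖ ≤ c * f i) :
    ∃ C > 0, ∀ i v, ‖B i *ᵥ v‖ ≤ C * f i * ‖v‖ := by
  choose c hc using fun j : n => h (Pi.single j 1)
  refine ⟨∑ j, ‖c j‖ + 1, by positivity, fun i v => ?_⟩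
  have hsum : B i *ᵥ v = ∑ j, v j • (B i *ᵥ Pi.single j 1) := by
    ext k
    simp [mulVec, dotProduct, Finset.sum_apply, mul_comm]
  calc ‖B i *ᵥ v‖ ≤ ∑ j, ‖v j‖ * ‖B i *ᵥ Pi.single j 1‖ := by
        rw [hsum]
        exact (norm_sum_le _ _).trans_eq (by simp only [norm_smul])
    _ ≤ ∑ j, ‖v‖ * (‖c j‖ * f i) := by
        gcongr with j
        · exact norm_le_pi_norm v j
        · exact (hc j i).trans (mul_le_mul_of_nonneg_right (Real.le_norm_self _) (hf i))
    _ ≤ (∑ j, ‖c j‖ + 1) * f i * ‖v‖ := by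
        rw [← Finset.mul_sum, ← Finset.sum_mul]
        nlinarith [mul_nonneg (hf i) (norm_nonneg v)]

theorem Hurwitz.exists_norm_exp_smul_mulVec_le {n : Type*} [Fintype n] [DecidableEq n]
    {M : Matrix n n ℝ} (hM : Hurwitz M) :
    ∃ c > 0, ∃ r > 0, ∀ t ≥ (0 : ℝ), ∀ v, ‖exp (t • M) *ᵥ v‖ ≤ c * Real.exp (-r * t) * ‖v‖ := by
  set Mc := M.map (algebraMap ℝ ℂ)
  obtain ⟨r, hr, hrate⟩ : ∃ r > 0, ∀ μ ∈ spectrum ℂ Mc, μ.re < -r := by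
    have hsmall : ∀ᶠ r in nhds (0 : ℝ), ∀ μ ∈ spectrum ℂ Mc, μ.re < -r :=
      (Filter.eventually_all_finite (finite_spectrum Mc)).2 fun μ hμ =>
        (eventually_lt_nhds (neg_pos.2 (hM μ hμ))).mono fun r hr => by linarith
    exact ((hsmall.filter_mono (nhdsWithin_le_nhds (s := Set.Ioi 0))).and
      self_mem_nhdsWithin).exists.imp fun r hr => ⟨hr.2, hr.1⟩
  have hdecay := Matrix.expDecaySubmodule_eq_top hrate
  obtain ⟨c, hc, hbound⟩ := Matrix.exists_norm_mulVec_le_of_forall_exists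
    (B := fun t : Set.Ici (0 : ℝ) => exp ((t : ℝ) • M)) (f := fun t => Real.exp (-r * t))
    (fun _ => (Real.exp_pos _).le) fun v => by
      obtain ⟨c, hc⟩ : algebraMap ℝ ℂ ∘ v ∈ Mc.expDecaySubmodule r := hdecay ▸ Submodule.mem_top
      exact ⟨c, fun t => (Matrix.norm_exp_smul_mulVec_eq_norm_map M t v).trans_le (hc t t.2)⟩
  exact ⟨c, hc, r, hr, fun t ht v => hbound ⟨t, ht⟩ v⟩

theorem error_dynamics_constant_gain_general {k : ℕ}
    (Ab : Matrix (Fin 5) (Fin 5) ℝ)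
    (Kb : Matrix (Fin 5) (Fin k) ℝ) (Cb : Matrix (Fin k) (Fin 5) ℝ)
    (ω : ℝ → Fin 3 → ℝ)
    (R : ℝ → Matrix (Fin 3) (Fin 3) ℝ)
    (hSO : ∀ t, R t * (R t)ᵀ = 1 ∧ (R t)ᵀ * R t = 1 ∧ (R t).det = 1)
    (hR : ∀ t i j, HasDerivAt (fun s => R s i j) ((R t * skew (ω t)) i j) t)
    (S : ℝ → Matrix (Fin 5 × Fin 3) (Fin 5 × Fin 3) ℝ)
    (hS : ∀ t, S t = -((1 : Matrix (Fin 5) (Fin 5) ℝ) ⊗ₖ skew (ω t)))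
    (A : ℝ → Matrix (Fin 5 × Fin 3) (Fin 5 × Fin 3) ℝ)
    (hA : ∀ t, A t = Ab ⊗ₖ (1 : Matrix (Fin 3) (Fin 3) ℝ) + S t)
    (K : Matrix (Fin 5 × Fin 3) (Fin k × Fin 3) ℝ)
    (hK : K = Kb ⊗ₖ (1 : Matrix (Fin 3) (Fin 3) ℝ))
    (C : Matrix (Fin k × Fin 3) (Fin 5 × Fin 3) ℝ)
    (hC : C = Cb ⊗ₖ (1 : Matrix (Fin 3) (Fin 3) ℝ))
    (T : ℝ → Matrix (Fin 5 × Fin 3) (Fin 5 × Fin 3) ℝ)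
    (hT : ∀ t, T t = (1 : Matrix (Fin 5) (Fin 5) ℝ) ⊗ₖ R t)
    (e : ℝ → Fin 5 × Fin 3 → ℝ)
    (he : ∀ t i, HasDerivAt (fun s => e s i) (((A t - K * C) *ᵥ e t) i) t)
    (η : ℝ → Fin 5 × Fin 3 → ℝ) (hη : ∀ t, η t = T t *ᵥ e t) :
    (∀ t i, HasDerivAt (fun s => η s i)
        ((((Ab - Kb * Cb) ⊗ₖ (1 : Matrix (Fin 3) (Fin 3) ℝ)) *ᵥ η t) i) t) ∧
      (Hurwitz (Ab - Kb * Cb) →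
        ∃ c > (0 : ℝ), ∃ lam > (0 : ℝ), ∀ t ≥ (0 : ℝ),
          ‖e t‖ ≤ c * Real.exp (-lam * t) * ‖e 0‖) := by
  set X := Ab - Kb * Cb
  have hKC : K * C = (Kb * Cb) ⊗ₖ 1 := by rw [hK, hC, ← mul_kronecker_mul, one_mul]
  have hgen (t : ℝ) : T t * (1 ⊗ₖ skew (ω t)) + T t * (A t - K * C) = (X ⊗ₖ 1) * T t := by
    rw [← mul_add, hA, hS, hKC, hT, ← one_kronecker_mul_kronecker_one, sub_kronecker]
    congr 1
    abel
  have hT' (t : ℝ) (i j : Fin 5 × Fin 3) : HasDerivAt (fun s => T s i j)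
      ((T t * ((1 : Matrix (Fin 5) (Fin 5) ℝ) ⊗ₖ skew (ω t))) i j) t := by
    simp_rw [hT, ← mul_kronecker_mul, one_mul]
    exact (hR t i.2 j.2).const_mul _
  have hdyn (t : ℝ) : HasDerivAt η ((X ⊗ₖ 1) *ᵥ η t) t := by
    have := hasDerivAt_mulVec (hT' t) (hasDerivAt_pi.2 (he t))
    rwa [mulVec_mulVec, ← add_mulVec, hgen, ← mulVec_mulVec, ← hη, ← funext hη] at this
  refine ⟨fun t => hasDerivAt_pi.1 (hdyn t), fun hX => ?_⟩
  obtain ⟨c, hc, r, hr, hdecay⟩ := (hX.kronecker_one (n := Fin 3)).exists_norm_exp_smul_mulVec_le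
  have hTU (t : ℝ) : T t ∈ unitaryGroup (Fin 5 × Fin 3) ℝ := by
    rw [hT]
    refine kronecker_mem_unitary (one_mem _) (mem_unitaryGroup_iff.2 ?_)
    rw [star_eq_conjTranspose, conjTranspose_eq_transpose_of_trivial, (hSO t).1]
  have hcard : (Fintype.card (Fin 5 × Fin 3) : ℝ) = 15 := by simp
  refine ⟨15 * 15 * c, by positivity, r, hr, fun t ht => ?_⟩
  calc ‖e t‖ = ‖star (T t) *ᵥ η t‖ := by
        rw [hη, mulVec_mulVec, mem_unitaryGroup_iff'.1 (hTU t), one_mulVec]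
    _ ≤ 15 * ‖η t‖ := hcard ▸ norm_mulVec_le_of_mem_unitaryGroup (Unitary.star_mem (hTU t)) _
    _ = 15 * ‖exp (t • (X ⊗ₖ 1)) *ᵥ η 0‖ := by rw [← eq_exp_smul_mulVec_of_hasDerivAt _ hdyn]
    _ ≤ 15 * (c * Real.exp (-r * t) * ‖η 0‖) := by gcongr; exact hdecay t ht _
    _ ≤ 15 * (c * Real.exp (-r * t) * (15 * ‖e 0‖)) := by
        gcongr
        exact hη 0 ▸ hcard ▸ norm_mulVec_le_of_mem_unitaryGroup (hTU 0) _
    _ = 15 * 15 * c * Real.exp (-r * t) * ‖e 0‖ := by ring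

/-- The transformed error `η = T e` obeys the LTI dynamics
`η̇ = ((Ā − K̄C̄) ⊗ I₃) η`; if `Ā − K̄C̄` is Hurwitz then `e(t) → 0` exponentially. -/
theorem error_dynamics_constant_gain {k : ℕ}
    (Ab : Matrix (Fin 5) (Fin 5) ℝ)
    (Kb : Matrix (Fin 5) (Fin k) ℝ) (Cb : Matrix (Fin k) (Fin 5) ℝ)
    (ω : ℝ → Fin 3 → ℝ) (hω : Continuous ω)
    (R : ℝ → Matrix (Fin 3) (Fin 3) ℝ)
    (hSO : ∀ t, R t * (R t)ᵀ = 1 ∧ (R t)ᵀ * R t = 1 ∧ (R t).det = 1)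
    (hR : ∀ t i j, HasDerivAt (fun s => R s i j) ((R t * skew (ω t)) i j) t)
    (S : ℝ → Matrix (Fin 5 × Fin 3) (Fin 5 × Fin 3) ℝ)
    (hS : ∀ t, S t = -((1 : Matrix (Fin 5) (Fin 5) ℝ) ⊗ₖ skew (ω t)))
    (A : ℝ → Matrix (Fin 5 × Fin 3) (Fin 5 × Fin 3) ℝ)
    (hA : ∀ t, A t = Ab ⊗ₖ (1 : Matrix (Fin 3) (Fin 3) ℝ) + S t)
    (K : Matrix (Fin 5 × Fin 3) (Fin k × Fin 3) ℝ)
    (hK : K = Kb ⊗ₖ (1 : Matrix (Fin 3) (Fin 3) ℝ))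
    (C : Matrix (Fin k × Fin 3) (Fin 5 × Fin 3) ℝ)
    (hC : C = Cb ⊗ₖ (1 : Matrix (Fin 3) (Fin 3) ℝ))
    (T : ℝ → Matrix (Fin 5 × Fin 3) (Fin 5 × Fin 3) ℝ)
    (hT : ∀ t, T t = (1 : Matrix (Fin 5) (Fin 5) ℝ) ⊗ₖ R t)
    (e : ℝ → Fin 5 × Fin 3 → ℝ)
    (he : ∀ t i, HasDerivAt (fun s => e s i) (((A t - K * C) *ᵥ e t) i) t)
    (η : ℝ → Fin 5 × Fin 3 → ℝ) (hη : ∀ t, η t = T t *ᵥ e t) :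
    (∀ t i, HasDerivAt (fun s => η s i)
        ((((Ab - Kb * Cb) ⊗ₖ (1 : Matrix (Fin 3) (Fin 3) ℝ)) *ᵥ η t) i) t) ∧
      (Hurwitz (Ab - Kb * Cb) →
        ∃ c > (0 : ℝ), ∃ lam > (0 : ℝ), ∀ t ≥ (0 : ℝ),
          ‖e t‖ ≤ c * Real.exp (-lam * t) * ‖e 0‖) :=
  error_dynamics_constant_gain_general Ab Kb Cb ω R hSO hR S hS A hA K hK C hC T hT e he η hη
end
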